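/- Suppose (σ, u) ∈ P_k(K; ℂ^{3×3}_sym) × P_{k+1}(K; ℂ³) satisfies the homogeneous local HDG equations: (LOC-a) iκ(Aσ, ξ)_K − (u, ∇·ξ)_K = 0 for all ξ ∈ P_k(K; ℂ^{3×3}_sym), and (LOC-b) (∇·σ, w)_K + ⟨τ_K P_M u, w⟩_{∂K} + iκ(ρu, w)_K = 0 for all w ∈ P_{k+1}(K; ℂ³). Then iκ(‖σ‖²_{A,K} − ‖u‖²_{ρ,K}) + ⟨τ_K P_M ū, P_M u⟩_{∂K} = 0; consequently P_M u = 0 on ∂K and ‖σ‖_{A,K} = ‖u‖_{ρ,K}. -/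

import Mathlib

noncomputable section
open MeasureTheory
open scoped Classical Matrix

/-- Euclidean 3-space. -/
abbrev E3 : Type := EuclideanSpace ℝ (Fin 3)
/-- Complex 3-vectors (with pointwise Euclidean norm used via coordinates). -/
abbrev V3 : Type := Fin 3 → ℂ
/-- Real 3-vectors. -/
abbrev V3R : Type := Fin 3 → ℝ
abbrev MatC : Type := Matrix (Fin 3) (Fin 3) ℂ
abbrev MatR : Type := Matrix (Fin 3) (Fin 3) ℝ

/-- A nondegenerate tetrahedron in `ℝ³`, given by its four (affinely independent) vertices. -/
structure Tet : Type where
  v : Fin 4 → E3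
  indep : AffineIndependent ℝ v

namespace Tet

/-- The (closed) tetrahedron. -/
def K (T : Tet) : Set E3 := convexHull ℝ (Set.range T.v)

/-- The diameter `h_K`. -/
def hK (T : Tet) : ℝ := Metric.diam T.K

/-- The inradius `ρ_K`. -/
def inradius (T : Tet) : ℝ := sSup {r : ℝ | ∃ c : E3, Metric.ball c r ⊆ T.K}

/-- The face opposite to the vertex `v i`. -/
def face (T : Tet) (i : Fin 4) : Set E3 := convexHull ℝ (T.v '' {j | j ≠ i})

/-- The outward unit normal on the face opposite to `v i`:  the unit vector orthogonal to
the face and pointing away from the remaining vertex. -/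
def normal (T : Tet) (i : Fin 4) : E3 :=
  if h : ∃ n : E3, ‖n‖ = 1 ∧
      (∀ j k : Fin 4, j ≠ i → k ≠ i → (inner ℝ n (T.v j - T.v k) : ℝ) = 0) ∧
      (inner ℝ n (T.v i - T.v (i.succAbove 0)) : ℝ) < 0
  then h.choose else 0

end Tet

/-- Partial derivative in the `j`-th coordinate direction. -/
def pderiv' (f : E3 → ℂ) (x : E3) (j : Fin 3) : ℂ := fderiv ℝ f x (EuclideanSpace.single j (1:ℝ))
def pderivR (f : E3 → ℝ) (x : E3) (j : Fin 3) : ℝ := fderiv ℝ f x (EuclideanSpace.single j (1:ℝ))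

/-- Gradient matrix `(∇u)_{ij} = ∂_j u_i`. -/
def grad (u : E3 → V3) (x : E3) : MatC := Matrix.of fun i j => pderiv' (fun y => u y i) x j
def gradR (u : E3 → V3R) (x : E3) : MatR := Matrix.of fun i j => pderivR (fun y => u y i) x j

/-- Symmetric gradient `ε(u) = (∇u + (∇u)ᵀ)/2`. -/
def eps (u : E3 → V3) (x : E3) : MatC := (2:ℂ)⁻¹ • (grad u x + (grad u x)ᵀ)
def epsR (u : E3 → V3R) (x : E3) : MatR := (2:ℝ)⁻¹ • (gradR u x + (gradR u x)ᵀ)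

/-- Row-wise divergence of a matrix field. -/
def divM (σ : E3 → MatC) (x : E3) : V3 := fun i => ∑ j, pderiv' (fun y => σ y i j) x j
def divMR (σ : E3 → MatR) (x : E3) : V3R := fun i => ∑ j, pderivR (fun y => σ y i j) x j

/-- Frobenius product `M : N = trace (Nᵀ M)` (bilinear, no conjugation). -/
def frobC (M N : MatC) : ℂ := ∑ a, ∑ b, M a b * N a b
def frobR (M N : MatR) : ℝ := ∑ a, ∑ b, M a b * N a b

/-- Entrywise complex conjugation of a matrix. -/
def mapConj (M : MatC) : MatC := Matrix.of fun a b => starRingEnd ℂ (M a b)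

/-- Product of a complex matrix with a real vector, `(ξ n)_a = Σ_b ξ_{ab} n_b`. -/
def matVecR (ξ : MatC) (n : E3) : V3 := fun a => ∑ b, ξ a b * ((n b : ℝ) : ℂ)
def matVecRR (ξ : MatR) (n : E3) : V3R := fun a => ∑ b, ξ a b * n b

/-- `L²(K)` norm of a vector field (Euclidean norm pointwise). -/
def l2K (T : Tet) (u : E3 → V3) : ℝ := Real.sqrt (∫ x in T.K, ∑ c, ‖u x c‖ ^ 2)
/-- `L²(K)` norm of a matrix field (Frobenius norm pointwise). -/
def l2Km (T : Tet) (M : E3 → MatC) : ℝ := Real.sqrt (∫ x in T.K, ∑ a, ∑ b, ‖M x a b‖ ^ 2)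

/-- Antisymmetric complex matrices. -/
def IsSkew (ξ : MatC) : Prop := ξᵀ = -ξ

/-- Evaluation of a polynomial in three variables at a point of `ℝ³`. -/
def evalP (p : MvPolynomial (Fin 3) ℂ) (x : E3) : ℂ := MvPolynomial.eval (fun j => ((x j : ℝ) : ℂ)) p
def evalPR (p : MvPolynomial (Fin 3) ℝ) (x : E3) : ℝ := MvPolynomial.eval (fun j => x j) p

/-- `u ∈ P_k(·; ℂ³)`: a vector field given by polynomials of total degree `≤ k`. -/
def IsPolyVec (k : ℕ) (u : E3 → V3) : Prop :=
  ∃ p : Fin 3 → MvPolynomial (Fin 3) ℂ, (∀ c, (p c).totalDegree ≤ k) ∧ ∀ x c, u x c = evalP (p c) x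
def IsPolyVecR (k : ℕ) (u : E3 → V3R) : Prop :=
  ∃ p : Fin 3 → MvPolynomial (Fin 3) ℝ, (∀ c, (p c).totalDegree ≤ k) ∧ ∀ x c, u x c = evalPR (p c) x

/-- `σ ∈ P_k(·; ℂ^{3×3}_sym)`: a symmetric-matrix-valued polynomial field of degree `≤ k`. -/
def IsPolyMatSym (k : ℕ) (σ : E3 → MatC) : Prop :=
  (∀ x, (σ x)ᵀ = σ x) ∧
  ∃ p : Fin 3 → Fin 3 → MvPolynomial (Fin 3) ℂ,
    (∀ a b, (p a b).totalDegree ≤ k) ∧ ∀ x a b, σ x a b = evalP (p a b) x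
def IsPolyMatSymR (k : ℕ) (σ : E3 → MatR) : Prop :=
  (∀ x, (σ x)ᵀ = σ x) ∧
  ∃ p : Fin 3 → Fin 3 → MvPolynomial (Fin 3) ℝ,
    (∀ a b, (p a b).totalDegree ≤ k) ∧ ∀ x a b, σ x a b = evalPR (p a b) x

/-- Functions on `∂K` whose restriction to each face of `K` is a `ℂ³`-valued polynomial of
degree `≤ k`. -/
def FacewisePoly (T : Tet) (k : ℕ) (μ : E3 → V3) : Prop :=
  ∀ i : Fin 4, ∃ p : Fin 3 → MvPolynomial (Fin 3) ℂ,
    (∀ c, (p c).totalDegree ≤ k) ∧ ∀ x ∈ T.face i, ∀ c, μ x c = evalP (p c) x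
def FacewisePolyR (T : Tet) (k : ℕ) (μ : E3 → V3R) : Prop :=
  ∀ i : Fin 4, ∃ p : Fin 3 → MvPolynomial (Fin 3) ℝ,
    (∀ c, (p c).totalDegree ≤ k) ∧ ∀ x ∈ T.face i, ∀ c, μ x c = evalPR (p c) x

/-- `Pw = P_M w`:  the `L²(∂K)`-orthogonal projection of `w` onto facewise polynomials of
degree `≤ k` (characterized by membership plus the orthogonality relations). -/
def IsPMProj (T : Tet) (k : ℕ) (w Pw : E3 → V3) : Prop :=
  FacewisePoly T k Pw ∧ ∀ μ : E3 → V3, FacewisePoly T k μ →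
    (∫ x in frontier T.K, ∑ c, (w x c - Pw x c) * starRingEnd ℂ (μ x c) ∂μH[2]) = 0

/-- As `IsPMProj`, with the boundary integral written as the sum of the four face integrals. -/
def IsPMProjF (T : Tet) (k : ℕ) (w Pw : E3 → V3) : Prop :=
  FacewisePoly T k Pw ∧ ∀ μ : E3 → V3, FacewisePoly T k μ →
    (∑ i : Fin 4, ∫ x in T.face i, ∑ c, (w x c - Pw x c) * starRingEnd ℂ (μ x c) ∂μH[2]) = 0

def IsPMProjFR (T : Tet) (k : ℕ) (w Pw : E3 → V3R) : Prop :=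
  FacewisePolyR T k Pw ∧ ∀ μ : E3 → V3R, FacewisePolyR T k μ →
    (∑ i : Fin 4, ∫ x in T.face i, ∑ c, (w x c - Pw x c) * μ x c ∂μH[2]) = 0

/-- The complex-linear extension of a real linear operator on `3×3` matrices. -/
def cext (L : MatR →ₗ[ℝ] MatR) (ξ : MatC) : MatC :=
  Matrix.of fun a b =>
    (((L (Matrix.of fun i j => (ξ i j).re)) a b : ℝ) : ℂ) +
    (((L (Matrix.of fun i j => (ξ i j).im)) a b : ℝ) : ℂ) * Complex.I

/-- `‖σ‖²_{A,K} = ∫_K (Aσ) : σ̄`. -/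
def aNormSqK (A : E3 → MatR →ₗ[ℝ] MatR) (S : Set E3) (σ : E3 → MatC) : ℝ :=
  (∫ x in S, frobC (cext (A x) (σ x)) (mapConj (σ x))).re

/-- `‖u‖²_{ρ,K} = ∫_K ρ u·ū`. -/
def rhoNormSqK (ρ : E3 → ℝ) (S : Set E3) (u : E3 → V3) : ℝ :=
  ∫ x in S, ρ x * ∑ c, ‖u x c‖ ^ 2

/-!
Testing (LOC-a) with `σ̄` and the complex conjugate of (LOC-b) with `ū` produces the same
volume term `(u, ∇·σ̄)_K` in both, so it cancels without any integration by parts, leaving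
`iκ (‖σ‖²_{A,K} - ‖u‖²_{ρ,K}) + ⟨τ_K P_M ū, u⟩_{∂K} = 0`. As `τ_K` is constant on faces,
`τ_K P_M ū` is a facewise polynomial, so `u` may be replaced by `P_M u` in the boundary term.
The volume term is purely imaginary because `A` is symmetric, hence the real part of
`⟨τ_K P_M ū, P_M u⟩_{∂K}` vanishes and coercivity of `τ_K` forces `P_M u = 0` a.e. on `∂K`.
Every relatively open piece of a face has positive surface measure (a face is the image of a
planar triangle under an injective affine map, which is bi-Lipschitz), so the facewise
polynomial `P_M u` vanishes identically on `∂K`, and the identity collapses to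
`‖σ‖_{A,K} = ‖u‖_{ρ,K}`.
-/

open Set Metric
open scoped ENNReal ComplexConjugate

theorem AffineMap.injective_of_affineIndependent_comp {ι k V P V₂ P₂ : Type*} [Fintype ι]
    [Ring k] [AddCommGroup V] [Module k V] [AddTorsor V P] [AddCommGroup V₂] [Module k V₂]
    [AddTorsor V₂ P₂] (f : P →ᵃ[k] P₂) {p : ι → P} (hp : affineSpan k (range p) = ⊤)
    (hfp : AffineIndependent k (f ∘ p)) : Function.Injective f := by
  intro y y' h
  have hmem (z : P) : z ∈ affineSpan k (range p) := hp ▸ AffineSubspace.mem_top k V z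
  obtain ⟨c, hc, rfl⟩ := eq_affineCombination_of_mem_affineSpan_of_fintype (hmem y)
  obtain ⟨c', hc', rfl⟩ := eq_affineCombination_of_mem_affineSpan_of_fintype (hmem y')
  rw [Finset.map_affineCombination _ _ _ hc, Finset.map_affineCombination _ _ _ hc',
    hfp.affineCombination_eq_iff_eq hc hc'] at h
  exact Finset.univ.affineCombination_congr h fun _ _ => rfl

section Triangle

variable {E : Type*} [NormedAddCommGroup E] [NormedSpace ℝ E]

def refTriangleVertex : Fin 3 → Fin 2 → ℝ := ![0, Pi.single 0 1, Pi.single 1 1]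

def triangleParam (w : Fin 3 → E) : (Fin 2 → ℝ) →ᵃ[ℝ] E where
  toFun y := w 0 + y 0 • (w 1 - w 0) + y 1 • (w 2 - w 0)
  linear := (LinearMap.proj 0).smulRight (w 1 - w 0) + (LinearMap.proj 1).smulRight (w 2 - w 0)
  map_vadd' y v := by
    simp only [Pi.vadd_apply', vadd_eq_add, LinearMap.add_apply, LinearMap.coe_smulRight,
      LinearMap.coe_proj, Function.eval, add_smul]
    abel

theorem triangleParam_comp_refTriangleVertex (w : Fin 3 → E) :
    triangleParam w ∘ refTriangleVertex = w := by
  funext m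
  fin_cases m <;> simp [triangleParam, refTriangleVertex]

theorem image_triangleParam_convexHull (w : Fin 3 → E) :
    triangleParam w '' convexHull ℝ (range refTriangleVertex) = convexHull ℝ (range w) := by
  rw [AffineMap.image_convexHull, ← range_comp, triangleParam_comp_refTriangleVertex]

theorem hausdorffMeasure_two_eq_volume_fin_two : (μH[2] : Measure (Fin 2 → ℝ)) = volume := by
  simpa using hausdorffMeasure_pi_real (ι := Fin 2)

theorem hausdorffMeasure_convexHull_triangle_lt_top [MeasurableSpace E] [BorelSpace E]
    (w : Fin 3 → E) : μH[2] (convexHull ℝ (range w)) < ∞ := by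
  obtain ⟨K, hK⟩ := AffineMap.lipschitzWith_of_finiteDimensional (𝕜 := ℝ) (triangleParam w)
  rw [← image_triangleParam_convexHull]
  refine (hK.hausdorffMeasure_image_le zero_le_two _).trans_lt
    (ENNReal.mul_lt_top (by simp) ?_)
  rw [hausdorffMeasure_two_eq_volume_fin_two]
  exact ((finite_range _).isCompact_convexHull (𝕜 := ℝ)).measure_lt_top

theorem hausdorffMeasure_convexHull_triangle_inter_ball_pos [MeasurableSpace E] [BorelSpace E]
    {w : Fin 3 → E} (hw : AffineIndependent ℝ w) {x : E} (hx : x ∈ convexHull ℝ (range w))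
    {r : ℝ} (hr : 0 < r) : 0 < μH[2] (convexHull ℝ (range w) ∩ ball x r) := by
  set f := triangleParam w
  set D := convexHull ℝ (range refTriangleVertex)
  have hfq : AffineIndependent ℝ (f ∘ refTriangleVertex) := by
    rwa [triangleParam_comp_refTriangleVertex]
  have hspan : affineSpan ℝ (range refTriangleVertex) = ⊤ :=
    (hfq.of_comp f).affineSpan_eq_top_iff_card_eq_finrank_add_one.2 (by simp)
  have hint : (interior D).Nonempty :=
    (convex_convexHull ℝ _).interior_nonempty_iff_affineSpan_eq_top.2
      (by rwa [affineSpan_convexHull])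
  obtain ⟨K, hK⟩ := AffineMap.antilipschitzWith_of_finiteDimensional
    (f.injective_of_affineIndependent_comp hspan hfq)
  obtain ⟨L, hL⟩ := AffineMap.lipschitzWith_of_finiteDimensional (𝕜 := ℝ) f
  rw [← image_triangleParam_convexHull] at hx ⊢
  obtain ⟨y, hy, rfl⟩ := hx
  set U := f ⁻¹' ball (f y) r
  have hU : IsOpen U := isOpen_ball.preimage hL.continuous
  have hyD : y ∈ closure (interior D) := by
    rw [(convex_convexHull ℝ _).closure_interior_eq_closure_of_nonempty_interior hint]
    exact subset_closure hy
  have hS : 0 < μH[2] (U ∩ interior D) := by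
    rw [hausdorffMeasure_two_eq_volume_fin_two]
    exact (hU.inter isOpen_interior).measure_pos _
      (mem_closure_iff.1 hyD U hU (mem_ball_self hr))
  have himage : f '' (U ∩ interior D) ⊆ f '' D ∩ ball (f y) r :=
    image_subset_iff.2 fun z hz => ⟨mem_image_of_mem f (interior_subset hz.2), hz.1⟩
  have hSimage := hS.trans_le (hK.le_hausdorffMeasure_image zero_le_two _)
  exact (ENNReal.mul_pos_iff.1 hSimage).2.trans_le (measure_mono himage)

end Triangle

theorem eqOn_zero_of_ae_restrict_eq_zero {X F : Type*} [PseudoMetricSpace X] [MeasurableSpace X]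
    [TopologicalSpace F] [T1Space F] [Zero F] {μ : Measure X} {s : Set X}
    (hs : ∀ x ∈ s, ∀ r > 0, 0 < μ (s ∩ ball x r)) {f : X → F} (hf : ContinuousOn f s)
    (h : ∀ᵐ x ∂μ.restrict s, f x = 0) : ∀ x ∈ s, f x = 0 := by
  intro x hx
  by_contra hne
  obtain ⟨r, hr, hball⟩ :=
    Metric.mem_nhdsWithin_iff.1 (hf x hx (isOpen_compl_singleton.mem_nhds hne))
  have hnull : μ.restrict s {y | f y ≠ 0} = 0 := ae_iff.1 h
  refine (hs x hx r hr).ne' (measure_mono_null (fun y hy => ?_) (nonpos_iff_eq_zero.1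
    ((Measure.le_restrict_apply _ _).trans hnull.le)))
  exact ⟨hball ⟨hy.2, hy.1⟩, hy.1⟩

theorem MvPolynomial.totalDegree_map_le {R S σ : Type*} [CommSemiring R] [CommSemiring S]
    (f : R →+* S) (p : MvPolynomial σ R) : (MvPolynomial.map f p).totalDegree ≤ p.totalDegree :=
  Finset.sup_mono (MvPolynomial.support_map_subset f p)

theorem continuous_evalP (p : MvPolynomial (Fin 3) ℂ) : Continuous (evalP p) :=
  (MvPolynomial.continuous_eval p).comp (by fun_prop)

theorem evalP_map_conj (p : MvPolynomial (Fin 3) ℂ) (x : E3) :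
    evalP (MvPolynomial.map (starRingEnd ℂ) p) x = conj (evalP p x) := by
  induction p using MvPolynomial.induction_on <;> simp_all [evalP]

theorem pderiv'_conj (f : E3 → ℂ) (x : E3) (j : Fin 3) :
    pderiv' (fun y => conj (f y)) x j = conj (pderiv' f x j) := by
  rw [pderiv', show (fun y => conj (f y)) = Complex.conjCLE ∘ f from rfl,
    ContinuousLinearEquiv.comp_fderiv]
  rfl

theorem divM_mapConj (σ : E3 → MatC) (x : E3) (c : Fin 3) :
    divM (fun y => mapConj (σ y)) x c = conj (divM σ x c) := by
  simp only [divM, map_sum]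
  exact Finset.sum_congr rfl fun j _ => pderiv'_conj (fun y => σ y c j) x j

section PolynomialFields

variable {k : ℕ}

theorem IsPolyVec.continuous {u : E3 → V3} (hu : IsPolyVec k u) : Continuous u := by
  obtain ⟨p, -, hp⟩ := hu
  exact continuous_pi fun c => (continuous_evalP (p c)).congr fun x => (hp x c).symm

theorem IsPolyVec.conj {u : E3 → V3} (hu : IsPolyVec k u) :
    IsPolyVec k (fun x c => conj (u x c)) := by
  obtain ⟨p, hdeg, hp⟩ := hu
  exact ⟨fun c => MvPolynomial.map (starRingEnd ℂ) (p c),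
    fun c => (MvPolynomial.totalDegree_map_le _ _).trans (hdeg c),
    fun x c => by rw [evalP_map_conj, ← hp]⟩

theorem IsPolyMatSym.mapConj {σ : E3 → MatC} (hσ : IsPolyMatSym k σ) :
    IsPolyMatSym k (fun x => mapConj (σ x)) := by
  obtain ⟨hsym, p, hdeg, hp⟩ := hσ
  refine ⟨fun x => ?_, fun a b => MvPolynomial.map (starRingEnd ℂ) (p a b),
    fun a b => (MvPolynomial.totalDegree_map_le _ _).trans (hdeg a b), fun x a b => ?_⟩
  · ext a b
    exact congrArg conj (congrFun (congrFun (hsym x) a) b)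
  · simp only [_root_.mapConj, Matrix.of_apply, evalP_map_conj, hp]

end PolynomialFields

namespace Tet

variable (T : Tet)

def basis : AffineBasis (Fin 4) ℝ E3 :=
  ⟨T.v, T.indep, by
    rw [T.indep.affineSpan_eq_top_iff_card_eq_finrank_add_one]
    simp [finrank_euclideanSpace]⟩

theorem isCompact_K : IsCompact T.K := (finite_range T.v).isCompact_convexHull (𝕜 := ℝ)

theorem K_eq : T.K = {x | ∀ i, 0 ≤ T.basis.coord i x} := T.basis.convexHull_eq_nonneg_coord

theorem interior_K : interior T.K = {x | ∀ i, 0 < T.basis.coord i x} :=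
  T.basis.interior_convexHull

theorem face_eq (i : Fin 4) : T.face i = convexHull ℝ (range (T.v ∘ i.succAbove)) := by
  rw [face, range_comp, Fin.range_succAbove]
  rfl

theorem isCompact_face (i : Fin 4) : IsCompact (T.face i) :=
  T.face_eq i ▸ (finite_range _).isCompact_convexHull (𝕜 := ℝ)

theorem mem_face_iff {i : Fin 4} {x : E3} :
    x ∈ T.face i ↔ x ∈ T.K ∧ T.basis.coord i x = 0 := by
  constructor
  · intro hx
    refine ⟨convexHull_mono (image_subset_range _ _) hx, ?_⟩
    have hconv : Convex ℝ {y : E3 | T.basis.coord i y = 0} :=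
      (convex_singleton 0).affine_preimage (T.basis.coord i)
    refine convexHull_min ?_ hconv hx
    rintro _ ⟨j, hj, rfl⟩
    exact T.basis.coord_apply_ne (Ne.symm hj)
  · rintro ⟨hxK, hxi⟩
    rw [K_eq] at hxK
    have hsum := T.basis.sum_coord_apply_eq_one x
    have hx : x = ∑ j, T.basis.coord j x • T.v j := by
      conv_lhs => rw [← T.basis.affineCombination_coord_eq_self x]
      exact Finset.univ.affineCombination_eq_linear_combination _ _ hsum
    rw [hx, ← Finset.sum_erase_add _ _ (Finset.mem_univ i), hxi, zero_smul, add_zero]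
    refine (convex_convexHull ℝ _).sum_mem (fun j _ => hxK j) ?_
      fun j hj => subset_convexHull ℝ _ ⟨j, Finset.ne_of_mem_erase hj, rfl⟩
    rw [Finset.sum_erase_eq_sub (Finset.mem_univ i), hsum, hxi, sub_zero]

theorem frontier_K : frontier T.K = ⋃ i, T.face i := by
  ext x
  simp only [T.isCompact_K.isClosed.frontier_eq, mem_sdiff, T.interior_K, mem_iUnion,
    T.mem_face_iff, mem_ofPred_eq, not_forall, not_lt]
  constructor
  · rintro ⟨hxK, i, hi⟩
    have hnonneg : x ∈ {x | ∀ j, 0 ≤ T.basis.coord j x} := T.K_eq ▸ hxK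
    exact ⟨i, hxK, le_antisymm hi (hnonneg i)⟩
  · rintro ⟨i, hxK, hi⟩
    exact ⟨hxK, i, hi.le⟩

theorem face_subset_frontier (i : Fin 4) : T.face i ⊆ frontier T.K :=
  T.frontier_K ▸ subset_iUnion T.face i

theorem hK_pos : 0 < T.hK := by
  have hv (i : Fin 4) : T.v i ∈ T.K := subset_convexHull ℝ _ ⟨i, rfl⟩
  calc (0 : ℝ) < dist (T.v 0) (T.v 1) := dist_pos.2 (T.indep.injective.ne (by decide))
    _ ≤ T.hK := Metric.dist_le_diam_of_mem T.isCompact_K.isBounded (hv 0) (hv 1)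

theorem hausdorffMeasure_face_lt_top (i : Fin 4) : μH[2] (T.face i) < ∞ :=
  T.face_eq i ▸ hausdorffMeasure_convexHull_triangle_lt_top _

theorem hausdorffMeasure_face_inter_ball_pos {i : Fin 4} {x : E3} (hx : x ∈ T.face i) {r : ℝ}
    (hr : 0 < r) : 0 < μH[2] (T.face i ∩ ball x r) := by
  rw [T.face_eq] at hx ⊢
  exact hausdorffMeasure_convexHull_triangle_inter_ball_pos
    (T.indep.comp_embedding ⟨_, Fin.succAbove_right_injective⟩) hx hr

theorem integrableOn_frontier {F : Type*} [NormedAddCommGroup F] {f : E3 → F}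
    (hf : ∀ i, ContinuousOn f (T.face i)) : IntegrableOn f (frontier T.K) μH[2] := by
  rw [frontier_K, integrableOn_finite_iUnion]
  exact fun i => (hf i).integrableOn_of_subset_isCompact (T.isCompact_face i)
    (T.isCompact_face i).isClosed.measurableSet subset_rfl
    (T.hausdorffMeasure_face_lt_top i).ne

theorem eq_zero_on_frontier_of_ae {F : Type*} [TopologicalSpace F] [T1Space F] [Zero F]
    {f : E3 → F} (hf : ∀ i, ContinuousOn f (T.face i))
    (h : ∀ᵐ x ∂μH[2].restrict (frontier T.K), f x = 0) : ∀ x ∈ frontier T.K, f x = 0 := by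
  rw [frontier_K]
  rintro x ⟨_, ⟨i, rfl⟩, hx⟩
  exact eqOn_zero_of_ae_restrict_eq_zero
    (fun y hy r hr => T.hausdorffMeasure_face_inter_ball_pos hy hr) (hf i)
    (ae_restrict_of_ae_restrict_of_subset (T.face_subset_frontier i) h) x hx

end Tet

def Tet.FacewiseConst {α : Type*} (T : Tet) (τ : E3 → α) : Prop :=
  ∀ i, ∃ M, ∀ x ∈ T.face i, τ x = M

theorem Tet.FacewiseConst.continuousOn {α : Type*} [TopologicalSpace α] {T : Tet} {τ : E3 → α}
    (hτ : T.FacewiseConst τ) (i : Fin 4) : ContinuousOn τ (T.face i) := by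
  obtain ⟨M, hM⟩ := hτ i
  exact continuousOn_const.congr hM

theorem FacewisePoly.continuousOn {T : Tet} {k : ℕ} {μ : E3 → V3} (hμ : FacewisePoly T k μ)
    (i : Fin 4) : ContinuousOn μ (T.face i) := by
  obtain ⟨p, -, hp⟩ := hμ i
  exact (continuous_pi fun c => continuous_evalP (p c)).continuousOn.congr
    fun x hx => funext (hp x hx)

theorem FacewisePoly.matMul {T : Tet} {k : ℕ} {τ : E3 → MatR} (hτ : T.FacewiseConst τ)
    {μ : E3 → V3} (hμ : FacewisePoly T k μ) :
    FacewisePoly T k (fun x a => ∑ b, ((τ x a b : ℝ) : ℂ) * μ x b) := by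
  intro i
  obtain ⟨M, hM⟩ := hτ i
  obtain ⟨p, hdeg, hp⟩ := hμ i
  refine ⟨fun a => ∑ b, MvPolynomial.C ((M a b : ℝ) : ℂ) * p b, fun a => ?_, fun x hx a => ?_⟩
  · refine (MvPolynomial.totalDegree_finsetSum _ _).trans (Finset.sup_le fun b _ => ?_)
    exact (MvPolynomial.totalDegree_mul _ _).trans (by simpa using hdeg b)
  · simp [evalP, hM x hx, hp x hx]

/-- `⟨τ f, g⟩_{∂K}`, bilinear (no conjugation). -/
def boundaryPairing (T : Tet) (τ : E3 → MatR) (f g : E3 → V3) : ℂ :=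
  ∫ x in frontier T.K, ∑ a, (∑ b, ((τ x a b : ℝ) : ℂ) * f x b) * g x a ∂μH[2]

theorem conj_boundaryPairing (T : Tet) (τ : E3 → MatR) (f g : E3 → V3) :
    conj (boundaryPairing T τ f g) =
      boundaryPairing T τ (fun x c => conj (f x c)) (fun x c => conj (g x c)) := by
  simp only [boundaryPairing, ← integral_conj, map_sum, map_mul, Complex.conj_ofReal]

theorem IsPMProj.boundaryPairing_conj_eq {T : Tet} {k : ℕ} {u Pu : E3 → V3}
    (hPu : IsPMProj T k u Pu) {τ : E3 → MatR} (hτ : T.FacewiseConst τ) (hu : Continuous u) :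
    boundaryPairing T τ (fun x c => conj (Pu x c)) u =
      boundaryPairing T τ (fun x c => conj (Pu x c)) Pu := by
  obtain ⟨hPoly, horth⟩ := hPu
  have hcont (g : E3 → V3) (hg : ∀ i, ContinuousOn g (T.face i)) (i : Fin 4) :
      ContinuousOn (fun x => ∑ a, (∑ b, ((τ x a b : ℝ) : ℂ) * conj (Pu x b)) * g x a)
        (T.face i) := by
    have := hτ.continuousOn i
    have := hPoly.continuousOn i
    have := hg i
    fun_prop
  rw [← sub_eq_zero, boundaryPairing, boundaryPairing,
    ← integral_sub (T.integrableOn_frontier (hcont u fun _ => hu.continuousOn))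
      (T.integrableOn_frontier (hcont Pu hPoly.continuousOn)),
    ← horth _ (hPoly.matMul hτ)]
  refine integral_congr_ae (Filter.Eventually.of_forall fun x => ?_)
  simp only [map_sum, map_mul, Complex.conj_ofReal, ← Finset.sum_sub_distrib]
  exact Finset.sum_congr rfl fun a _ => by ring

theorem Tet.eq_zero_on_frontier_of_integral_norm_sq_eq_zero (T : Tet) {μ : E3 → V3}
    (hμ : ∀ i, ContinuousOn μ (T.face i))
    (h : ∫ x in frontier T.K, ∑ c, ‖μ x c‖ ^ 2 ∂μH[2] = 0) : ∀ x ∈ frontier T.K, μ x = 0 := by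
  have hint : IntegrableOn (fun x => ∑ c, ‖μ x c‖ ^ 2) (frontier T.K) μH[2] :=
    T.integrableOn_frontier fun i => by have := hμ i; fun_prop
  have hae := (setIntegral_eq_zero_iff_of_nonneg_ae
    (Filter.Eventually.of_forall fun x => by positivity) hint).1 h
  refine T.eq_zero_on_frontier_of_ae hμ (hae.mono fun x hx => ?_)
  simpa [Finset.sum_eq_zero_iff_of_nonneg, funext_iff] using hx

theorem frobR_comm (M N : MatR) : frobR M N = frobR N M := by
  simp only [frobR, mul_comm]

theorem im_frobC_cext_mapConj {L : MatR →ₗ[ℝ] MatR}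
    (hL : ∀ ξ χ : MatR, ξᵀ = ξ → χᵀ = χ → frobR (L ξ) χ = frobR ξ (L χ)) {s : MatC}
    (hs : sᵀ = s) : (frobC (cext L s) (mapConj s)).im = 0 := by
  set sRe : MatR := Matrix.of fun i j => (s i j).re
  set sIm : MatR := Matrix.of fun i j => (s i j).im
  have hRe : sReᵀ = sRe := by
    ext a b; exact congrArg Complex.re (congrFun (congrFun hs a) b)
  have hIm : sImᵀ = sIm := by
    ext a b; exact congrArg Complex.im (congrFun (congrFun hs a) b)
  have him : (frobC (cext L s) (mapConj s)).im = frobR (L sIm) sRe - frobR (L sRe) sIm := by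
    simp only [frobC, frobR, cext, mapConj, Matrix.of_apply, Complex.im_sum,
      ← Finset.sum_sub_distrib]
    refine Finset.sum_congr rfl fun a _ => Finset.sum_congr rfl fun b _ => ?_
    simp only [Complex.mul_im, Complex.add_re, Complex.ofReal_re, Complex.mul_re, Complex.I_re,
      Complex.ofReal_im, Complex.I_im, Complex.conj_im, Complex.add_im, Complex.conj_re,
      Matrix.of_apply, sIm, sRe]
    ring
  rw [him, hL sIm sRe hIm hRe, frobR_comm, sub_self]

theorem integral_frobC_cext_mapConj {A : E3 → MatR →ₗ[ℝ] MatR} {S : Set E3}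
    (hA : ∀ᵐ x ∂(volume.restrict S),
      ∀ ξ χ : MatR, ξᵀ = ξ → χᵀ = χ → frobR (A x ξ) χ = frobR ξ (A x χ))
    {σ : E3 → MatC} (hσ : ∀ x, (σ x)ᵀ = σ x) :
    ∫ x in S, frobC (cext (A x) (σ x)) (mapConj (σ x)) = aNormSqK A S σ := by
  refine (Complex.conj_eq_iff_re.1 ?_).symm
  rw [← integral_conj]
  exact integral_congr_ae (hA.mono fun x hx =>
    Complex.conj_eq_iff_im.2 (im_frobC_cext_mapConj hx (hσ x)))

theorem integral_rho_mul_conj (ρ : E3 → ℝ) (S : Set E3) (u : E3 → V3) :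
    ∫ x in S, ∑ c, ((ρ x : ℝ) : ℂ) * u x c * conj (u x c) = rhoNormSqK ρ S u := by
  rw [rhoNormSqK, ← integral_complex_ofReal]
  refine integral_congr_ae (Filter.Eventually.of_forall fun x => ?_)
  simp only [mul_assoc, Complex.mul_conj, Complex.normSq_eq_norm_sq, ← Finset.mul_sum]
  push_cast
  rfl

theorem conj_integral_divM_mul_conj (S : Set E3) (σ : E3 → MatC) (u : E3 → V3) :
    conj (∫ x in S, ∑ c, divM σ x c * conj (u x c)) =
      ∫ x in S, ∑ c, u x c * divM (fun y => mapConj (σ y)) x c := by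
  rw [← integral_conj]
  refine integral_congr_ae (Filter.Eventually.of_forall fun x => ?_)
  simp only [map_sum, map_mul, Complex.conj_conj, divM_mapConj, mul_comm]

theorem energy_identity_of_conj_tests {T : Tet} {κ : ℝ} {A : E3 → MatR →ₗ[ℝ] MatR}
    {ρ : E3 → ℝ} {τ : E3 → MatR} {σ : E3 → MatC} {u Pu : E3 → V3}
    (hA : ∀ᵐ x ∂(volume.restrict T.K),
      ∀ ξ χ : MatR, ξᵀ = ξ → χᵀ = χ → frobR (A x ξ) χ = frobR ξ (A x χ))
    (hσ : ∀ x, (σ x)ᵀ = σ x)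
    (ha : Complex.I * κ * (∫ x in T.K, frobC (cext (A x) (σ x)) (mapConj (σ x))) -
      (∫ x in T.K, ∑ c, u x c * divM (fun y => mapConj (σ y)) x c) = 0)
    (hb : (∫ x in T.K, ∑ c, divM σ x c * conj (u x c)) +
      boundaryPairing T τ Pu (fun x c => conj (u x c)) +
      Complex.I * κ * (∫ x in T.K, ∑ c, ((ρ x : ℝ) : ℂ) * u x c * conj (u x c)) = 0) :
    Complex.I * κ * ((aNormSqK A T.K σ : ℂ) - rhoNormSqK ρ T.K u) +
      boundaryPairing T τ (fun x c => conj (Pu x c)) u = 0 := by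
  rw [integral_frobC_cext_mapConj hA hσ] at ha
  have hb' := congrArg conj hb
  simp only [integral_rho_mul_conj, map_add, map_mul, map_zero, Complex.conj_I,
    Complex.conj_ofReal, conj_integral_divM_mul_conj, conj_boundaryPairing,
    Complex.conj_conj] at hb'
  linear_combination ha + hb'

theorem statement5_general (T : Tet) (k : ℕ) (κ : ℝ) (hκ : 0 < κ)
    (A : E3 → MatR →ₗ[ℝ] MatR) (c₀ : ℝ) (cA : E3 → ℝ)
    (hA : ∀ᵐ x ∂(volume.restrict T.K),
      (∀ ξ : MatR, ξᵀ = ξ → (A x ξ)ᵀ = A x ξ) ∧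
      (∀ ξ χ : MatR, ξᵀ = ξ → χᵀ = χ → frobR (A x ξ) χ = frobR ξ (A x χ)) ∧
      (∀ ξ : MatR, ξᵀ = ξ →
        c₀ * frobR ξ ξ ≤ frobR (A x ξ) ξ ∧ frobR (A x ξ) ξ ≤ cA x * frobR ξ ξ))
    (ρ : E3 → ℝ)
    (τ : E3 → MatR)
    (hτface : ∀ i : Fin 4, ∃ M : MatR, Mᵀ = M ∧ ∀ x ∈ T.face i, τ x = M)
    (Cτ₁ Cτ₂ : ℝ) (hCτ₁ : 0 < Cτ₁)
    (hτ : ∀ μ : E3 → V3,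
      Cτ₁ * T.hK⁻¹ * (∫ x in frontier T.K, ∑ c, ‖μ x c‖ ^ 2 ∂μH[2]) ≤
        (∫ x in frontier T.K,
          ∑ a, (∑ b, ((τ x a b : ℝ) : ℂ) * μ x b) * starRingEnd ℂ (μ x a) ∂μH[2]).re ∧
      (∫ x in frontier T.K,
          ∑ a, (∑ b, ((τ x a b : ℝ) : ℂ) * μ x b) * starRingEnd ℂ (μ x a) ∂μH[2]).re ≤
        Cτ₂ * T.hK⁻¹ * (∫ x in frontier T.K, ∑ c, ‖μ x c‖ ^ 2 ∂μH[2]))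
    (σ : E3 → MatC) (u : E3 → V3)
    (hσ : IsPolyMatSym k σ) (hu : IsPolyVec (k+1) u)
    (Pu : E3 → V3) (hPu : IsPMProj T k u Pu)
    -- (LOC-a): `iκ(Aσ, ξ)_K − (u, ∇·ξ)_K = 0` for all `ξ ∈ P_k(K; ℂ^{3×3}_sym)`
    (heq1 : ∀ ξ : E3 → MatC, IsPolyMatSym k ξ →
      Complex.I * (κ : ℂ) * (∫ x in T.K, frobC (cext (A x) (σ x)) (ξ x)) -
        (∫ x in T.K, ∑ c, u x c * divM ξ x c) = 0)
    -- (LOC-b): `(∇·σ, w)_K + ⟨τ_K P_M u, w⟩_{∂K} + iκ(ρu, w)_K = 0` for all `w ∈ P_{k+1}(K; ℂ³)`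
    (heq2 : ∀ w : E3 → V3, IsPolyVec (k+1) w →
      (∫ x in T.K, ∑ c, divM σ x c * w x c) +
        (∫ x in frontier T.K,
          ∑ a, (∑ b, ((τ x a b : ℝ) : ℂ) * Pu x b) * w x a ∂μH[2]) +
        Complex.I * (κ : ℂ) * (∫ x in T.K, ∑ c, ((ρ x : ℝ) : ℂ) * u x c * w x c) = 0) :
    Complex.I * (κ : ℂ) * ((aNormSqK A T.K σ : ℂ) - (rhoNormSqK ρ T.K u : ℂ)) +
        (∫ x in frontier T.K,
          ∑ a, (∑ b, ((τ x a b : ℝ) : ℂ) * starRingEnd ℂ (Pu x b)) * Pu x a ∂μH[2]) = 0 ∧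
      (∀ x ∈ frontier T.K, Pu x = 0) ∧
      Real.sqrt (aNormSqK A T.K σ) = Real.sqrt (rhoNormSqK ρ T.K u) := by
  have hτc : T.FacewiseConst τ := fun i => (hτface i).imp fun _ hM => hM.2
  have hId : Complex.I * κ * ((aNormSqK A T.K σ : ℂ) - rhoNormSqK ρ T.K u) +
      boundaryPairing T τ (fun x c => conj (Pu x c)) Pu = 0 := by
    rw [← hPu.boundaryPairing_conj_eq hτc hu.continuous]
    exact energy_identity_of_conj_tests (hA.mono fun x hx => hx.2.1) hσ.1
      (heq1 _ hσ.mapConj) (heq2 _ hu.conj)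
  -- the identity has purely imaginary first term, so coercivity of `τ` kills `P_M u`
  have hre : (boundaryPairing T τ Pu fun x c => conj (Pu x c)).re = 0 := by
    have := congrArg Complex.re hId
    rw [← Complex.conj_re, conj_boundaryPairing]
    simpa using this
  have hPu0 : ∀ x ∈ frontier T.K, Pu x = 0 := by
    refine T.eq_zero_on_frontier_of_integral_norm_sq_eq_zero hPu.1.continuousOn
      (le_antisymm ?_ (integral_nonneg fun x => by positivity))
    have hcoer := (hτ Pu).1
    rw [← boundaryPairing, hre] at hcoer
    exact nonpos_of_mul_nonpos_right hcoer (mul_pos hCτ₁ (inv_pos.2 T.hK_pos))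
  have hB : boundaryPairing T τ (fun x c => conj (Pu x c)) Pu = 0 :=
    setIntegral_eq_zero_of_forall_eq_zero fun x hx => by simp [hPu0 x hx]
  refine ⟨hId, hPu0, ?_⟩
  rw [hB, add_zero, mul_eq_zero, sub_eq_zero, Complex.ofReal_inj] at hId
  exact congrArg Real.sqrt (hId.resolve_left (by simp [hκ.ne']))

/-- local energy identity.  If `(σ, u) ∈ P_k(K;ℂ^{3×3}_sym) × P_{k+1}(K;ℂ³)`
solves the homogeneous local HDG equations, then
`iκ(‖σ‖²_{A,K} − ‖u‖²_{ρ,K}) + ⟨τ_K P_M ū, P_M u⟩_{∂K} = 0`; consequently `P_M u = 0` on `∂K`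
and `‖σ‖_{A,K} = ‖u‖_{ρ,K}`. -/
theorem statement5 (T : Tet) (k : ℕ) (κ : ℝ) (hκ : 0 < κ)
    (A : E3 → MatR →ₗ[ℝ] MatR) (c₀ : ℝ) (hc₀ : 0 < c₀) (cA : E3 → ℝ)
    (hA : ∀ᵐ x ∂(volume.restrict T.K),
      (∀ ξ : MatR, ξᵀ = ξ → (A x ξ)ᵀ = A x ξ) ∧
      (∀ ξ χ : MatR, ξᵀ = ξ → χᵀ = χ → frobR (A x ξ) χ = frobR ξ (A x χ)) ∧
      (∀ ξ : MatR, ξᵀ = ξ →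
        c₀ * frobR ξ ξ ≤ frobR (A x ξ) ξ ∧ frobR (A x ξ) ξ ≤ cA x * frobR ξ ξ))
    (ρ : E3 → ℝ) (ρ₀ : ℝ) (hρ₀ : 0 < ρ₀)
    (hρ : ∀ᵐ x ∂(volume.restrict T.K), ρ₀ ≤ ρ x)
    (τ : E3 → MatR)
    (hτface : ∀ i : Fin 4, ∃ M : MatR, Mᵀ = M ∧ ∀ x ∈ T.face i, τ x = M)
    (Cτ₁ Cτ₂ : ℝ) (hCτ₁ : 0 < Cτ₁) (hCτ₂ : 0 < Cτ₂)
    (hτ : ∀ μ : E3 → V3,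
      Cτ₁ * T.hK⁻¹ * (∫ x in frontier T.K, ∑ c, ‖μ x c‖ ^ 2 ∂μH[2]) ≤
        (∫ x in frontier T.K,
          ∑ a, (∑ b, ((τ x a b : ℝ) : ℂ) * μ x b) * starRingEnd ℂ (μ x a) ∂μH[2]).re ∧
      (∫ x in frontier T.K,
          ∑ a, (∑ b, ((τ x a b : ℝ) : ℂ) * μ x b) * starRingEnd ℂ (μ x a) ∂μH[2]).re ≤
        Cτ₂ * T.hK⁻¹ * (∫ x in frontier T.K, ∑ c, ‖μ x c‖ ^ 2 ∂μH[2]))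
    (σ : E3 → MatC) (u : E3 → V3)
    (hσ : IsPolyMatSym k σ) (hu : IsPolyVec (k+1) u)
    (Pu : E3 → V3) (hPu : IsPMProj T k u Pu)
    -- (LOC-a): `iκ(Aσ, ξ)_K − (u, ∇·ξ)_K = 0` for all `ξ ∈ P_k(K; ℂ^{3×3}_sym)`
    (heq1 : ∀ ξ : E3 → MatC, IsPolyMatSym k ξ →
      Complex.I * (κ : ℂ) * (∫ x in T.K, frobC (cext (A x) (σ x)) (ξ x)) -
        (∫ x in T.K, ∑ c, u x c * divM ξ x c) = 0)
    -- (LOC-b): `(∇·σ, w)_K + ⟨τ_K P_M u, w⟩_{∂K} + iκ(ρu, w)_K = 0` for all `w ∈ P_{k+1}(K; ℂ³)`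
    (heq2 : ∀ w : E3 → V3, IsPolyVec (k+1) w →
      (∫ x in T.K, ∑ c, divM σ x c * w x c) +
        (∫ x in frontier T.K,
          ∑ a, (∑ b, ((τ x a b : ℝ) : ℂ) * Pu x b) * w x a ∂μH[2]) +
        Complex.I * (κ : ℂ) * (∫ x in T.K, ∑ c, ((ρ x : ℝ) : ℂ) * u x c * w x c) = 0) :
    Complex.I * (κ : ℂ) * ((aNormSqK A T.K σ : ℂ) - (rhoNormSqK ρ T.K u : ℂ)) +
        (∫ x in frontier T.K,
          ∑ a, (∑ b, ((τ x a b : ℝ) : ℂ) * starRingEnd ℂ (Pu x b)) * Pu x a ∂μH[2]) = 0 ∧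
      (∀ x ∈ frontier T.K, Pu x = 0) ∧
      Real.sqrt (aNormSqK A T.K σ) = Real.sqrt (rhoNormSqK ρ T.K u) :=
  statement5_general T k κ hκ A c₀ cA hA ρ τ hτface Cτ₁ Cτ₂ hCτ₁ hτ σ u hσ hu Pu hPu heq1 heq2
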